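/- Let {X_n} be i.i.d. random variables, θ = sup{r ≥ 0 : E|X|^r < ∞}, and θ̂_n = (log n)/(log max_{1≤k≤n}|X_k|). Then liminf_{n→∞} θ̂_n = θ almost surely. -/

import Mathlib

/-!
If `E|X|^r < ∞`, the first Borel–Cantelli lemma gives `|X_n|^r ≤ n + 1` for all large `n`, so
`max_{k ≤ n} |X_k| ≤ n^{1/r}` eventually and `θ̂_n ≥ r` eventually. If `E|X|^r = ∞`, independence
and the second Borel–Cantelli lemma give `|X_n|^r > n` infinitely often; at those times
`θ̂_{n+1} ≤ r log (n + 1) / log n`, so `liminf θ̂_n ≤ r`. Finiteness of `E|X|^r` is downward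
closed in `r`, so testing both bounds at countably many rational `r` pins the liminf down to `θ`.
-/

open MeasureTheory ProbabilityTheory Filter
open scoped ENNReal

/-- `log x = ln (e ∨ x)` as in the paper. -/
noncomputable def Log (x : ℝ) : ℝ := Real.log (max (Real.exp 1) x)

/-- `pmax X n ω = max_{1 ≤ k ≤ n} X_k(ω)` (indexed `0,…,n-1`), junk value at `n = 0`. -/
noncomputable def pmax {Ω : Type*} (X : ℕ → Ω → ℝ) (n : ℕ) (ω : Ω) : ℝ :=
  if h : n = 0 then X 0 ω
  else (Finset.range n).sup' (Finset.nonempty_range_iff.mpr h) fun k => X k ω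

lemma one_le_Log (x : ℝ) : 1 ≤ Log x := by
  simpa [Log] using Real.log_le_log (Real.exp_pos 1) (le_max_left (Real.exp 1) x)

lemma Log_pos (x : ℝ) : 0 < Log x := one_pos.trans_le (one_le_Log x)

lemma Log_mono : Monotone Log := fun _ _ h =>
  Real.log_le_log ((Real.exp_pos 1).trans_le (le_max_left _ _)) (max_le_max le_rfl h)

lemma Log_of_exp_one_le {x : ℝ} (hx : Real.exp 1 ≤ x) : Log x = Real.log x := by
  rw [Log, max_eq_right hx]

lemma log_le_Log {x : ℝ} (hx : 0 ≤ x) : Real.log x ≤ Log x := by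
  rcases hx.eq_or_lt with rfl | hx
  · simpa using (Log_pos 0).le
  · exact Real.log_le_log hx (le_max_right _ _)

lemma Log_le_iff {x L : ℝ} (hL : 1 ≤ L) : Log x ≤ L ↔ x ≤ Real.exp L := by
  rw [Log, Real.log_le_iff_le_exp ((Real.exp_pos 1).trans_le (le_max_left _ _)), max_le_iff]
  exact and_iff_right (Real.exp_le_exp.mpr hL)

lemma le_exp_Log (x : ℝ) : x ≤ Real.exp (Log x) := (Log_le_iff (one_le_Log x)).mp le_rfl

lemma tendsto_Log_atTop : Tendsto Log atTop atTop :=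
  tendsto_atTop_mono' _ (eventually_ge_atTop 0 |>.mono fun _ hx => log_le_Log hx)
    Real.tendsto_log_atTop

lemma eventually_log_add_one_le_mul_log {c : ℝ} (hc : 1 < c) :
    ∀ᶠ n : ℕ in atTop, Real.log (n + 1) ≤ c * Real.log n := by
  have h : Tendsto (fun n : ℕ => (c - 1) * Real.log n) atTop atTop :=
    (Real.tendsto_log_atTop.comp tendsto_natCast_atTop_atTop).const_mul_atTop (by linarith)
  filter_upwards [eventually_ge_atTop 1, h.eventually_ge_atTop (Real.log 2)] with n hn h2
  have hn : (1 : ℝ) ≤ n := by exact_mod_cast hn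
  calc Real.log (n + 1) ≤ Real.log (2 * n) := Real.log_le_log (by linarith) (by linarith)
    _ = Real.log 2 + Real.log n := Real.log_mul two_ne_zero (by linarith)
    _ ≤ c * Real.log n := by linarith

section pmax

variable {Ω : Type*} {X : ℕ → Ω → ℝ}

lemma le_pmax {k n : ℕ} (h : k < n) (ω : Ω) : X k ω ≤ pmax X n ω := by
  rw [pmax, dif_neg (Nat.zero_lt_of_lt h).ne']
  exact Finset.le_sup' (fun k => X k ω) (Finset.mem_range.mpr h)

lemma pmax_le {n : ℕ} (hn : n ≠ 0) {ω : Ω} {c : ℝ} (h : ∀ k < n, X k ω ≤ c) :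
    pmax X n ω ≤ c := by
  rw [pmax, dif_neg hn]
  exact Finset.sup'_le _ _ fun k hk => h k (Finset.mem_range.mp hk)

end pmax

lemma tsum_indicator_one_eq_ceil {Ω : Type*} (c : ℝ) (s : ℕ → Set Ω) (ω : Ω)
    (h : ∀ n, ω ∈ s n ↔ (n : ℝ) < c) :
    ∑' n : ℕ, (s n).indicator 1 ω = (⌈c⌉₊ : ℝ≥0∞) := by
  rw [tsum_eq_sum (s := Finset.range ⌈c⌉₊) fun n hn => Set.indicator_of_notMem
      (fun hmem => hn (Finset.mem_range.mpr (Nat.lt_ceil.mpr ((h n).mp hmem)))) _,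
    Finset.sum_congr rfl fun n hn =>
      Set.indicator_of_mem ((h n).mpr (Nat.lt_ceil.mp (Finset.mem_range.mp hn))) _]
  simp

section LayerCake

variable {Ω : Type*} [MeasurableSpace Ω] (μ : Measure Ω) {g : Ω → ℝ}

lemma lintegral_ofReal_le_tsum_measure_lt (hg : Measurable g) :
    ∫⁻ ω, ENNReal.ofReal (g ω) ∂μ ≤ ∑' n : ℕ, μ {ω | (n : ℝ) < g ω} := by
  have hs (n : ℕ) : MeasurableSet {ω | (n : ℝ) < g ω} := measurableSet_lt measurable_const hg
  calc ∫⁻ ω, ENNReal.ofReal (g ω) ∂μ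
      ≤ ∫⁻ ω, ∑' n : ℕ, {ω' | (n : ℝ) < g ω'}.indicator 1 ω ∂μ := by
        refine lintegral_mono fun ω => ?_
        rw [tsum_indicator_one_eq_ceil (g ω) _ ω fun n => Iff.rfl, ← ENNReal.ofReal_natCast]
        exact ENNReal.ofReal_le_ofReal (Nat.le_ceil _)
    _ = ∑' n : ℕ, μ {ω | (n : ℝ) < g ω} := by
        rw [lintegral_tsum fun n => (measurable_one.indicator (hs n)).aemeasurable]
        exact tsum_congr fun n => lintegral_indicator_one (hs n)

lemma tsum_measure_add_one_lt_le_lintegral_ofReal (hg : Measurable g) :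
    ∑' n : ℕ, μ {ω | (n : ℝ) + 1 < g ω} ≤ ∫⁻ ω, ENNReal.ofReal (g ω) ∂μ := by
  have hs (n : ℕ) : MeasurableSet {ω | (n : ℝ) + 1 < g ω} := measurableSet_lt measurable_const hg
  calc ∑' n : ℕ, μ {ω | (n : ℝ) + 1 < g ω}
      = ∫⁻ ω, ∑' n : ℕ, {ω' | (n : ℝ) + 1 < g ω'}.indicator 1 ω ∂μ := by
        rw [lintegral_tsum fun n => (measurable_one.indicator (hs n)).aemeasurable]
        exact tsum_congr fun n => (lintegral_indicator_one (hs n)).symm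
    _ ≤ ∫⁻ ω, ENNReal.ofReal (g ω) ∂μ := by
        refine lintegral_mono fun ω => ?_
        rw [tsum_indicator_one_eq_ceil (g ω - 1) _ ω fun n =>
          (lt_sub_iff_add_lt (a := (n : ℝ)) (b := 1) (c := g ω)).symm]
        rcases le_or_gt (g ω - 1) 0 with h | h
        · simp [Nat.ceil_eq_zero.mpr h]
        · rw [← ENNReal.ofReal_natCast]
          exact ENNReal.ofReal_le_ofReal (by linarith [Nat.ceil_lt_add_one h.le])

end LayerCake

lemma lintegral_ofReal_rpow_abs_lt_top_of_le {Ω : Type*} [MeasurableSpace Ω] {μ : Measure Ω}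
    [IsFiniteMeasure μ] {f : Ω → ℝ} {s t : ℝ} (ht : 0 ≤ t) (hts : t ≤ s)
    (hs : ∫⁻ ω, ENNReal.ofReal (|f ω| ^ s) ∂μ < ⊤) :
    ∫⁻ ω, ENNReal.ofReal (|f ω| ^ t) ∂μ < ⊤ := by
  have hle (ω : Ω) : ENNReal.ofReal (|f ω| ^ t) ≤ 1 + ENNReal.ofReal (|f ω| ^ s) := by
    rw [← ENNReal.ofReal_one, ← ENNReal.ofReal_add zero_le_one (by positivity)]
    refine ENNReal.ofReal_le_ofReal ?_
    rcases le_total |f ω| 1 with h | h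
    · linarith [Real.rpow_le_one (abs_nonneg _) h ht, Real.rpow_nonneg (abs_nonneg (f ω)) s]
    · linarith [Real.rpow_le_rpow_of_exponent_le h hts]
  calc ∫⁻ ω, ENNReal.ofReal (|f ω| ^ t) ∂μ ≤ ∫⁻ ω, 1 + ENNReal.ofReal (|f ω| ^ s) ∂μ :=
        lintegral_mono hle
    _ = μ Set.univ + ∫⁻ ω, ENNReal.ofReal (|f ω| ^ s) ∂μ := by
        rw [lintegral_add_left measurable_const, lintegral_one]
    _ < ⊤ := ENNReal.add_lt_top.mpr ⟨measure_lt_top μ _, hs⟩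

section BorelCantelli

variable {Ω : Type*} [MeasurableSpace Ω] {μ : Measure Ω} {Y : ℕ → Ω → ℝ}

lemma ae_eventually_le_add_one_of_lintegral_lt_top (hY : Measurable (Y 0))
    (hident : ∀ n, IdentDistrib (Y n) (Y 0) μ μ)
    (hfin : ∫⁻ ω, ENNReal.ofReal (Y 0 ω) ∂μ < ⊤) :
    ∀ᵐ ω ∂μ, ∀ᶠ n : ℕ in atTop, Y n ω ≤ n + 1 := by
  have hsum : ∑' n : ℕ, μ (Y n ⁻¹' Set.Ioi ((n : ℝ) + 1)) ≠ ⊤ := by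
    rw [tsum_congr fun n => (hident n).measure_mem_eq measurableSet_Ioi]
    exact ((tsum_measure_add_one_lt_le_lintegral_ofReal μ hY).trans_lt hfin).ne
  filter_upwards [ae_eventually_notMem hsum] with ω hω
  exact hω.mono fun n hn => not_lt.mp hn

lemma ProbabilityTheory.iIndepFun.iIndepSet_preimage (hindep : iIndepFun Y μ)
    (hY : ∀ n, Measurable (Y n)) {B : ℕ → Set ℝ} (hB : ∀ n, MeasurableSet (B n)) :
    iIndepSet (fun n => Y n ⁻¹' B n) μ :=
  (iIndepSet_iff_meas_biInter fun n => hY n (hB n)).mpr fun s =>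
    iIndepFun_iff_measure_inter_preimage_eq_mul.mp hindep s fun n _ => hB n

lemma ae_frequently_lt_of_lintegral_eq_top [IsProbabilityMeasure μ] (hY : ∀ n, Measurable (Y n))
    (hindep : iIndepFun Y μ) (hident : ∀ n, IdentDistrib (Y n) (Y 0) μ μ)
    (hinf : ∫⁻ ω, ENNReal.ofReal (Y 0 ω) ∂μ = ⊤) :
    ∀ᵐ ω ∂μ, ∃ᶠ n : ℕ in atTop, (n : ℝ) < Y n ω := by
  set s : ℕ → Set Ω := fun n => Y n ⁻¹' Set.Ioi (n : ℝ)
  have hs (n : ℕ) : MeasurableSet (s n) := hY n measurableSet_Ioi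
  have hsum : ∑' n, μ (s n) = ⊤ := by
    rw [tsum_congr fun n => (hident n).measure_mem_eq measurableSet_Ioi]
    exact top_unique (hinf ▸ lintegral_ofReal_le_tsum_measure_lt μ (hY 0))
  have hlimsup : μ (limsup s atTop) = 1 :=
    measure_limsup_eq_one hs (hindep.iIndepSet_preimage hY fun _ => measurableSet_Ioi) hsum
  filter_upwards [(mem_ae_iff_prob_eq_one (MeasurableSet.measurableSet_limsup hs)).mpr hlimsup]
    with ω hω
  exact mem_limsup_iff_frequently_mem.mp hω

end BorelCantelli

/-- The paper's `θ̂_n`. -/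
noncomputable def momentIndexEstimator {Ω : Type*} (X : ℕ → Ω → ℝ) (n : ℕ) (ω : Ω) : ℝ :=
  Log n / Log (pmax (fun k ω' => |X k ω'|) n ω)

section Estimator

variable {Ω : Type*} {X : ℕ → Ω → ℝ} {ω : Ω} {r : ℝ}

lemma eventually_le_momentIndexEstimator (hr : 0 < r)
    (hbd : ∀ᶠ k : ℕ in atTop, |X k ω| ^ r ≤ k + 1) :
    ∀ᶠ n in atTop, r ≤ momentIndexEstimator X n ω := by
  obtain ⟨N, hN⟩ := eventually_atTop.mp hbd
  set C := pmax (fun k ω' => |X k ω'|) N ω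
  have hlarge : ∀ᶠ n : ℕ in atTop, max 1 (Log C) ≤ Log n / r :=
    ((tendsto_Log_atTop.comp tendsto_natCast_atTop_atTop).atTop_div_const hr).eventually_ge_atTop _
  filter_upwards [eventually_gt_atTop N, hlarge] with n hNn hn
  have hmax : Log (pmax (fun k ω' => |X k ω'|) n ω) ≤ Log n / r := by
    rw [Log_le_iff (le_of_max_le_left hn)]
    refine pmax_le (by omega) fun k hk => ?_
    rcases lt_or_ge k N with hkN | hkN
    · calc |X k ω| ≤ C := le_pmax (X := fun k ω' => |X k ω'|) hkN ω
        _ ≤ Real.exp (Log C) := le_exp_Log C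
        _ ≤ Real.exp (Log n / r) := Real.exp_le_exp.mpr (le_of_max_le_right hn)
    · rw [← Real.rpow_le_rpow_iff (abs_nonneg _) (Real.exp_pos _).le hr, ← Real.exp_mul,
        div_mul_cancel₀ _ hr.ne']
      calc |X k ω| ^ r ≤ k + 1 := hN k hkN
        _ ≤ n := by exact_mod_cast hk
        _ ≤ Real.exp (Log n) := le_exp_Log _
  rw [momentIndexEstimator, le_div_iff₀ (Log_pos _)]
  rwa [le_div_iff₀ hr, mul_comm] at hmax

lemma frequently_momentIndexEstimator_le {q : ℝ} (hr : 0 < r) (hrq : r < q)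
    (hfreq : ∃ᶠ n : ℕ in atTop, (n : ℝ) < |X n ω| ^ r) :
    ∃ᶠ n in atTop, momentIndexEstimator X n ω ≤ q := by
  have hev := (eventually_log_add_one_le_mul_log ((one_lt_div hr).mpr hrq)).and
    (eventually_ge_atTop 2)
  refine (tendsto_add_atTop_nat 1).frequently ((hfreq.and_eventually hev).mono ?_)
  rintro n ⟨hX, hlog, hn⟩
  have hn : (2 : ℝ) ≤ n := by exact_mod_cast hn
  have hmax : Real.log n / r < Log (pmax (fun k ω' => |X k ω'|) (n + 1) ω) :=
    calc Real.log n / r = Real.log (n ^ r⁻¹) := by rw [Real.log_rpow (by linarith)]; ring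
      _ < Real.log |X n ω| := Real.log_lt_log (by positivity)
          ((Real.rpow_inv_lt_iff_of_pos (by linarith) (abs_nonneg _) hr).mpr hX)
      _ ≤ Log |X n ω| := log_le_Log (abs_nonneg _)
      _ ≤ _ := Log_mono (le_pmax (X := fun k ω' => |X k ω'|) n.lt_succ_self ω)
  rw [momentIndexEstimator, div_le_iff₀ (Log_pos _), Nat.cast_succ]
  calc Log (n + 1) = Real.log (n + 1) :=
        Log_of_exp_one_le (by linarith [Real.exp_one_lt_d9])
    _ ≤ q / r * Real.log n := hlog
    _ = q * (Real.log n / r) := by ring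
    _ ≤ q * Log (pmax (fun k ω' => |X k ω'|) (n + 1) ω) :=
        mul_le_mul_of_nonneg_left hmax.le (by linarith)

lemma ofReal_le_liminf_momentIndexEstimator (hr : 0 < r)
    (hbd : ∀ᶠ k : ℕ in atTop, |X k ω| ^ r ≤ k + 1) :
    ENNReal.ofReal r ≤ liminf (fun n => ENNReal.ofReal (momentIndexEstimator X n ω)) atTop :=
  le_liminf_of_le (by isBoundedDefault)
    ((eventually_le_momentIndexEstimator hr hbd).mono fun _ h => ENNReal.ofReal_le_ofReal h)

lemma liminf_momentIndexEstimator_le_ofReal (hr : 0 < r)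
    (hfreq : ∃ᶠ n : ℕ in atTop, (n : ℝ) < |X n ω| ^ r) :
    liminf (fun n => ENNReal.ofReal (momentIndexEstimator X n ω)) atTop ≤ ENNReal.ofReal r := by
  refine ENNReal.le_of_forall_pos_le_add fun ε hε _ => ?_
  rw [← ENNReal.ofReal_coe_nnreal, ← ENNReal.ofReal_add hr.le ε.coe_nonneg]
  refine liminf_le_of_frequently_le' ?_
  exact (frequently_momentIndexEstimator_le hr (lt_add_of_pos_right r hε) hfreq).mono
    fun _ h => ENNReal.ofReal_le_ofReal h

end Estimator

lemma eq_sSup_image_ofReal_of_forall_rat {S : Set ℝ}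
    (hS : ∀ ⦃s t : ℝ⦄, s ∈ S → 0 ≤ t → t ≤ s → t ∈ S) {L : ℝ≥0∞}
    (hlow : ∀ q : ℚ, 0 < q → (q : ℝ) ∈ S → ENNReal.ofReal q ≤ L)
    (hup : ∀ q : ℚ, 0 < q → (q : ℝ) ∉ S → L ≤ ENNReal.ofReal q) :
    L = sSup (ENNReal.ofReal '' S) := by
  refine le_antisymm (le_of_forall_gt_imp_ge_of_dense fun c hc => ?_) (sSup_le ?_)
  · obtain ⟨q, -, hsq, hqc⟩ := ENNReal.lt_iff_exists_rat_btwn.mp hc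
    have hq : 0 < q := Rat.cast_pos.mp (ENNReal.ofReal_pos.mp (pos_of_gt hsq))
    have hqS : (q : ℝ) ∉ S := fun h => hsq.not_ge (le_sSup ⟨q, h, rfl⟩)
    exact (hup q hq hqS).trans hqc.le
  · rintro _ ⟨s, hs, rfl⟩
    refine le_of_forall_lt fun c hc => ?_
    obtain ⟨q, hq0, hcq, hqs⟩ := ENNReal.lt_iff_exists_rat_btwn.mp hc
    have hq : 0 < q := Rat.cast_pos.mp (ENNReal.ofReal_pos.mp (pos_of_gt hcq))
    have hqs : (q : ℝ) ≤ s := (ENNReal.ofReal_lt_ofReal_iff'.mp hqs).1.le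
    exact hcq.trans_le (hlow q hq (hS hs (by exact_mod_cast hq0) hqs))

section IID

variable {Ω : Type*} [MeasurableSpace Ω] {μ : Measure Ω} {X : ℕ → Ω → ℝ} {r : ℝ}

lemma ae_ofReal_le_liminf_momentIndexEstimator (hmeas : Measurable (X 0))
    (hident : ∀ n, IdentDistrib (X n) (X 0) μ μ) (hr : 0 < r)
    (hfin : ∫⁻ ω, ENNReal.ofReal (|X 0 ω| ^ r) ∂μ < ⊤) :
    ∀ᵐ ω ∂μ, ENNReal.ofReal r ≤
      liminf (fun n => ENNReal.ofReal (momentIndexEstimator X n ω)) atTop := by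
  have hu : Measurable fun x : ℝ => |x| ^ r := by fun_prop
  filter_upwards [ae_eventually_le_add_one_of_lintegral_lt_top (hu.comp hmeas)
    (fun n => (hident n).comp hu) hfin] with ω hω
  exact ofReal_le_liminf_momentIndexEstimator hr hω

lemma ae_liminf_momentIndexEstimator_le_ofReal [IsProbabilityMeasure μ]
    (hmeas : ∀ n, Measurable (X n)) (hindep : iIndepFun X μ)
    (hident : ∀ n, IdentDistrib (X n) (X 0) μ μ) (hr : 0 < r)
    (hinf : ∫⁻ ω, ENNReal.ofReal (|X 0 ω| ^ r) ∂μ = ⊤) :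
    ∀ᵐ ω ∂μ, liminf (fun n => ENNReal.ofReal (momentIndexEstimator X n ω)) atTop ≤
      ENNReal.ofReal r := by
  have hu : Measurable fun x : ℝ => |x| ^ r := by fun_prop
  filter_upwards [ae_frequently_lt_of_lintegral_eq_top (fun n => hu.comp (hmeas n))
    (hindep.comp _ fun _ => hu) (fun n => (hident n).comp hu) hinf] with ω hω
  exact liminf_momentIndexEstimator_le_ofReal hr hω

end IID

theorem stmt14 {Ω : Type*} [MeasurableSpace Ω] (μ : Measure Ω) [IsProbabilityMeasure μ]
    (X : ℕ → Ω → ℝ) (hmeas : ∀ n, Measurable (X n))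
    (hindep : iIndepFun X μ)
    (hident : ∀ n, IdentDistrib (X n) (X 0) μ μ)
    (θ : ℝ≥0∞)
    (hθ : θ = sSup (ENNReal.ofReal '' {r : ℝ | 0 ≤ r ∧
        (∫⁻ ω, ENNReal.ofReal (|X 0 ω| ^ r) ∂μ) < ⊤})) :
    ∀ᵐ ω ∂μ,
      Filter.liminf (fun n : ℕ =>
        ENNReal.ofReal (Log n / Log (pmax (fun k ω' => |X k ω'|) n ω))) atTop = θ := by
  set S := {r : ℝ | 0 ≤ r ∧ (∫⁻ ω, ENNReal.ofReal (|X 0 ω| ^ r) ∂μ) < ⊤}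
  have hS : ∀ ⦃s t : ℝ⦄, s ∈ S → 0 ≤ t → t ≤ s → t ∈ S := fun _ _ hs ht hts =>
    ⟨ht, lintegral_ofReal_rpow_abs_lt_top_of_le ht hts hs.2⟩
  have hlow : ∀ᵐ ω ∂μ, ∀ q : ℚ, 0 < q → (q : ℝ) ∈ S → ENNReal.ofReal q ≤
      liminf (fun n => ENNReal.ofReal (momentIndexEstimator X n ω)) atTop :=
    ae_all_iff.mpr fun q => eventually_imp_distrib_left.mpr fun hq =>
      eventually_imp_distrib_left.mpr fun hqS => ae_ofReal_le_liminf_momentIndexEstimator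
        (hmeas 0) hident (Rat.cast_pos.mpr hq) hqS.2
  have hup : ∀ᵐ ω ∂μ, ∀ q : ℚ, 0 < q → (q : ℝ) ∉ S →
      liminf (fun n => ENNReal.ofReal (momentIndexEstimator X n ω)) atTop ≤ ENNReal.ofReal q :=
    ae_all_iff.mpr fun q => eventually_imp_distrib_left.mpr fun hq =>
      eventually_imp_distrib_left.mpr fun hqS => ae_liminf_momentIndexEstimator_le_ofReal
        hmeas hindep hident (Rat.cast_pos.mpr hq) (by simpa [S, hq.le] using hqS)
  filter_upwards [hlow, hup] with ω hlowω hupω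
  rw [hθ]
  exact eq_sSup_image_ofReal_of_forall_rat hS hlowω hupω
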